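/- arXiv:0810.3422 — 2 statements merged into one kernel-verified Lean document; each statement's English description precedes it below -/
import Mathlib

section
/- Fix an integer q ≥ 3 and ε > 0 with ε < (q-2)/q. With E(A_{d,w}) as in the RA ensemble, the quantity ∑_{w=1}^{K} ∑_{d=1}^{⌊N^{(q-2)/q - ε}⌋} E(A_{d,w}) tends to 0 as N = qK → ∞. Consequently the fraction of codes in the ensemble with minimum distance at most N^{(q-2)/q-ε} tends to zero. -/
/-- Ensemble-average IOWEF of the repeat-accumulate ensemble with repetition factor `q`,
block length `N = qK`: `E(A_{d,w}) = C(K,w)·C(d-1,⌈qw/2⌉-1)·C(N-d,⌊qw/2⌋)/C(N,qw)`. -/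
noncomputable def RAEnum (q K d w : ℕ) : ℝ :=
  (K.choose w : ℝ) *
    ((d - 1).choose ((q * w + 1) / 2 - 1) * (q * K - d).choose (q * w / 2) : ℝ) /
    ((q * K).choose (q * w) : ℝ)

/-!
Write `h = ⌈qw/2⌉` and `f = ⌊qw/2⌋`. The terms with `d < h` vanish; otherwise the hockey-stick
identity `∑_{d ≤ D} C(d-1, h-1) = C(D, h)` and `C(N, f) C(N-f, h) = C(N, qw) C(qw, f)` bound the
weight-`w` part of the sum over `d ≤ D` by `K^w 2^{qw} (2D/N)^h ≤ ρ^w`, where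
`ρ = K 2^q (2D/N)^{q/2}`, as long as `4D ≤ N`. For `D = ⌊N^{(q-2)/q-ε}⌋` and `K ≤ N` this gives
`ρ ≤ 2^{3q/2} N^{-εq/2} → 0`, and the double sum is at most `2ρ` once `ρ ≤ 1/2`.
-/

open Finset Filter Topology Nat

theorem sum_Icc_one_choose_pred (D k : ℕ) :
    ∑ d ∈ Icc 1 D, (d - 1).choose k = D.choose (k + 1) := by
  induction D with
  | zero => simp
  | succ D ih =>
    rw [sum_Icc_succ_top (by omega), ih, Nat.add_sub_cancel, choose_succ_succ', add_comm]

theorem choose_mul_sub_add_one_pow_le {N f h : ℕ} (hN : f + h ≤ N) :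
    N.choose f * (N - (f + h) + 1) ^ h ≤ h ! * ((f + h).choose f * N.choose (f + h)) := by
  have hdesc : (N - (f + h) + 1) ^ h ≤ h ! * (N - f).choose h := by
    rw [← descFactorial_eq_factorial_mul_choose, show N - (f + h) + 1 = N - f + 1 - h by omega]
    exact pow_sub_le_descFactorial _ _
  have hsplit : N.choose f * (N - f).choose h = N.choose (f + h) * (f + h).choose f := by
    simpa using (choose_mul (n := N) (k := f + h) (s := f) (by omega)).symm
  calc N.choose f * (N - (f + h) + 1) ^ h ≤ N.choose f * (h ! * (N - f).choose h) := by gcongr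
    _ = h ! * ((f + h).choose f * N.choose (f + h)) := by rw [mul_left_comm, hsplit]; ring

theorem sum_choose_pred_mul_choose_mul_pow_le {N D f h n : ℕ} (hh : 1 ≤ h) (hn : f + h = n)
    (hN : n ≤ N) :
    (∑ d ∈ Icc 1 D, (d - 1).choose (h - 1) * (N - d).choose f) * (N - n + 1) ^ h ≤
      D ^ h * 2 ^ n * N.choose n := by
  subst hn
  have hsum : ∑ d ∈ Icc 1 D, (d - 1).choose (h - 1) * (N - d).choose f ≤
      D.choose h * N.choose f :=
    calc ∑ d ∈ Icc 1 D, (d - 1).choose (h - 1) * (N - d).choose f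
        ≤ ∑ d ∈ Icc 1 D, (d - 1).choose (h - 1) * N.choose f := by
          gcongr; exact Nat.sub_le _ _
      _ = D.choose h * N.choose f := by
          rw [← sum_mul, sum_Icc_one_choose_pred, Nat.sub_add_cancel hh]
  calc (∑ d ∈ Icc 1 D, (d - 1).choose (h - 1) * (N - d).choose f) * (N - (f + h) + 1) ^ h
      ≤ D.choose h * N.choose f * (N - (f + h) + 1) ^ h := Nat.mul_le_mul_right _ hsum
    _ = D.choose h * (N.choose f * (N - (f + h) + 1) ^ h) := mul_assoc _ _ _
    _ ≤ D.choose h * (h ! * ((f + h).choose f * N.choose (f + h))) :=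
        Nat.mul_le_mul_left _ (choose_mul_sub_add_one_pow_le hN)
    _ = (h ! * D.choose h) * (f + h).choose f * N.choose (f + h) := by ring
    _ ≤ D ^ h * 2 ^ (f + h) * N.choose (f + h) := by
        gcongr
        · rw [← descFactorial_eq_factorial_mul_choose]; exact descFactorial_le_pow _ _
        · exact choose_le_two_pow _ _

theorem RAEnum_nonneg (q K d w : ℕ) : 0 ≤ RAEnum q K d w := by
  unfold RAEnum; positivity

theorem RAEnum_eq_zero_of_lt {q K d w : ℕ} (hd : 1 ≤ d) (hdw : d < (q * w + 1) / 2) :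
    RAEnum q K d w = 0 := by
  simp [RAEnum, choose_eq_zero_of_lt (show d - 1 < (q * w + 1) / 2 - 1 by omega)]

theorem sum_RAEnum_eq_choose_mul_sum_div (q K D w : ℕ) :
    ∑ d ∈ Icc 1 D, RAEnum q K d w = K.choose w *
      ((∑ d ∈ Icc 1 D,
          (d - 1).choose ((q * w + 1) / 2 - 1) * (q * K - d).choose (q * w / 2) : ℕ)
        / ((q * K).choose (q * w) : ℝ)) := by
  simp only [RAEnum, Nat.cast_sum, Nat.cast_mul, sum_div, mul_sum, mul_div_assoc]

theorem sum_RAEnum_le (q K D w : ℕ) (hqw : 0 < q * w) (hN : 2 * (q * w) ≤ q * K) :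
    ∑ d ∈ Icc 1 D, RAEnum q K d w ≤
      K ^ w * 2 ^ (q * w) * (2 * D / ((q * K : ℕ) : ℝ)) ^ ((q * w + 1) / 2) := by
  set n := q * w
  set N := q * K
  set h := (q * w + 1) / 2
  have hNpos : (0 : ℝ) < N := by exact_mod_cast (show 0 < N by omega)
  have hchoose : (0 : ℝ) < N.choose n := by exact_mod_cast choose_pos (by omega)
  have hhalf : (N : ℝ) / 2 ≤ (N - n + 1 : ℕ) := by
    rw [div_le_iff₀ two_pos]; exact_mod_cast (show N ≤ (N - n + 1) * 2 by omega)
  have key := sum_choose_pred_mul_choose_mul_pow_le (D := D) (show 1 ≤ h by omega)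
    (show n / 2 + h = n by omega) (show n ≤ N by omega)
  have hratio : ((∑ d ∈ Icc 1 D, (d - 1).choose (h - 1) * (N - d).choose (n / 2) : ℕ) : ℝ)
      / N.choose n ≤ 2 ^ n * (2 * D / N) ^ h :=
    calc _ ≤ (D : ℝ) ^ h * 2 ^ n / ((N - n + 1 : ℕ) : ℝ) ^ h := by
          rw [div_le_div_iff₀ hchoose (by positivity)]; exact_mod_cast key
      _ ≤ (D : ℝ) ^ h * 2 ^ n / ((N : ℝ) / 2) ^ h := by gcongr
      _ = 2 ^ n * (2 * D / N) ^ h := by rw [div_pow, div_pow, mul_pow]; field_simp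
  calc ∑ d ∈ Icc 1 D, RAEnum q K d w
      = K.choose w *
          (((∑ d ∈ Icc 1 D, (d - 1).choose (h - 1) * (N - d).choose (n / 2) : ℕ) : ℝ)
            / N.choose n) := sum_RAEnum_eq_choose_mul_sum_div q K D w
    _ ≤ K ^ w * (2 ^ n * (2 * D / N) ^ h) := by gcongr; exact_mod_cast choose_le_pow K w
    _ = _ := by ring

/-- The ratio `ρ` of the geometric bound `∑_{d ≤ D} E(A_{d,w}) ≤ ρ^w`. -/
noncomputable def RARatio (q K D : ℕ) : ℝ :=
  K * 2 ^ q * (2 * D / ((q * K : ℕ) : ℝ)) ^ ((q : ℝ) / 2)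

theorem sum_RAEnum_le_RARatio_pow (q K D w : ℕ) (hq : 0 < q) (hw : 1 ≤ w)
    (hD : 4 * D ≤ q * K) :
    ∑ d ∈ Icc 1 D, RAEnum q K d w ≤ RARatio q K D ^ w := by
  set x : ℝ := 2 * D / ((q * K : ℕ) : ℝ)
  have hqw : 0 < q * w := Nat.mul_pos hq hw
  rcases lt_or_ge D ((q * w + 1) / 2) with hDh | hhD
  · rw [sum_eq_zero fun d hd => RAEnum_eq_zero_of_lt (mem_Icc.1 hd).1 (by grind)]
    unfold RARatio; positivity
  have hx1 : x ≤ 1 := by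
    rw [div_le_one (by exact_mod_cast (show 0 < q * K by omega))]
    exact_mod_cast (show 2 * D ≤ q * K by omega)
  have hexp : x ^ ((q * w + 1) / 2) ≤ (x ^ ((q : ℝ) / 2)) ^ w := by
    rw [← Real.rpow_natCast, ← Real.rpow_natCast, ← Real.rpow_mul (by positivity)]
    refine Real.rpow_le_rpow_of_exponent_ge' (by positivity) hx1 (by positivity) ?_
    rw [div_mul_eq_mul_div, div_le_iff₀ two_pos]
    exact_mod_cast (show q * w ≤ (q * w + 1) / 2 * 2 by omega)
  calc ∑ d ∈ Icc 1 D, RAEnum q K d w ≤ K ^ w * 2 ^ (q * w) * x ^ ((q * w + 1) / 2) :=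
        sum_RAEnum_le q K D w hqw (by omega)
    _ ≤ K ^ w * 2 ^ (q * w) * (x ^ ((q : ℝ) / 2)) ^ w :=
        mul_le_mul_of_nonneg_left hexp (by positivity)
    _ = RARatio q K D ^ w := by rw [RARatio, mul_pow, mul_pow, pow_mul]

theorem sum_Icc_one_pow_le_two_mul {r : ℝ} (hr0 : 0 ≤ r) (hr : r ≤ 1 / 2) (K : ℕ) :
    ∑ w ∈ Icc 1 K, r ^ w ≤ 2 * r :=
  calc ∑ w ∈ Icc 1 K, r ^ w = ∑ w ∈ Ico 1 (K + 1), r ^ w := by rw [Ico_add_one_right_eq_Icc]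
    _ ≤ r ^ 1 / (1 - r) := geom_sum_Ico_le_of_lt_one hr0 (by linarith)
    _ ≤ 2 * r := by rw [pow_one, div_le_iff₀ (by linarith)]; nlinarith

theorem sum_sum_RAEnum_le_two_mul_RARatio (q K D : ℕ) (hq : 0 < q) (hD : 4 * D ≤ q * K)
    (hρ : RARatio q K D ≤ 1 / 2) :
    ∑ w ∈ Icc 1 K, ∑ d ∈ Icc 1 D, RAEnum q K d w ≤ 2 * RARatio q K D :=
  (sum_le_sum fun w hw => sum_RAEnum_le_RARatio_pow q K D w hq (mem_Icc.1 hw).1 hD).trans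
    (sum_Icc_one_pow_le_two_mul (by unfold RARatio; positivity) hρ K)

theorem mul_two_mul_div_rpow_le {N D K c p : ℝ} (hN : 0 < N) (hD0 : 0 ≤ D) (hD : D ≤ N ^ c)
    (hK : K ≤ N) (hp : 0 ≤ p) :
    K * (2 * D / N) ^ p ≤ 2 ^ p * N ^ (1 + (c - 1) * p) :=
  calc K * (2 * D / N) ^ p ≤ N * (2 * N ^ (c - 1)) ^ p := by
        gcongr
        rw [Real.rpow_sub hN, Real.rpow_one, mul_div_assoc]
        gcongr
    _ = 2 ^ p * N ^ (1 + (c - 1) * p) := by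
        rw [Real.mul_rpow (by norm_num) (by positivity), ← Real.rpow_mul hN.le,
          Real.rpow_add hN, Real.rpow_one]
        ring

theorem tendsto_RARatio_floor_rpow {q : ℕ} (hq : 0 < q) {ε : ℝ} (hε : 0 < ε) :
    Tendsto (fun K : ℕ => RARatio q K ⌊((q * K : ℕ) : ℝ) ^ (((q : ℝ) - 2) / q - ε)⌋₊)
      atTop (𝓝 0) := by
  set c := ((q : ℝ) - 2) / q - ε
  have hexp : 1 + (c - 1) * ((q : ℝ) / 2) = -(ε * q / 2) := by
    simp only [c]; field_simp; ring
  have hN : Tendsto (fun K : ℕ => ((q * K : ℕ) : ℝ)) atTop atTop :=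
    tendsto_natCast_atTop_atTop.comp (tendsto_id.const_mul_atTop' hq)
  have hlim := ((tendsto_rpow_neg_atTop (by positivity : 0 < ε * q / 2)).comp hN).const_mul
    ((2 : ℝ) ^ q * 2 ^ ((q : ℝ) / 2))
  rw [mul_zero] at hlim
  refine squeeze_zero' (.of_forall fun K => by unfold RARatio; positivity) ?_ hlim
  filter_upwards [eventually_ge_atTop 1] with K hK
  have hNpos : (0 : ℝ) < ((q * K : ℕ) : ℝ) := by exact_mod_cast Nat.mul_pos hq hK
  have hbound := mul_two_mul_div_rpow_le (c := c) hNpos (Nat.cast_nonneg _)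
    (Nat.floor_le (by positivity)) (show (K : ℝ) ≤ ((q * K : ℕ) : ℝ) by
      exact_mod_cast Nat.le_mul_of_pos_left K hq) (by positivity : 0 ≤ (q : ℝ) / 2)
  rw [hexp] at hbound
  simp only [RARatio, Function.comp_apply]
  linear_combination (2 : ℝ) ^ q * hbound

theorem eventually_four_mul_floor_rpow_le {c : ℝ} (hc : c < 1) :
    ∀ᶠ N : ℕ in atTop, 4 * ⌊(N : ℝ) ^ c⌋₊ ≤ N := by
  have hdecay := ((tendsto_rpow_neg_atTop (sub_pos.2 hc)).comp
    tendsto_natCast_atTop_atTop).eventually_le_const (by norm_num : (0 : ℝ) < 1 / 4)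
  filter_upwards [hdecay, eventually_gt_atTop 0] with N hsmall hN
  have hNr : (0 : ℝ) < N := by exact_mod_cast hN
  have hsplit : (N : ℝ) ^ c = (N : ℝ) ^ (-(1 - c)) * N := by
    rw [← Real.rpow_add_one hNr.ne']; ring_nf
  have hfloor := Nat.floor_le (by positivity : 0 ≤ (N : ℝ) ^ c)
  have h4 : (4 : ℝ) * ⌊(N : ℝ) ^ c⌋₊ ≤ N := by
    simp only [Function.comp_apply] at hsmall
    nlinarith
  exact_mod_cast h4

open Finset Filter in
theorem RA_cumulative_WEF_tendsto_zero_general (q : ℕ) (hq : 3 ≤ q) (ε : ℝ) (hε : 0 < ε) :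
    Tendsto (fun K : ℕ =>
        ∑ w ∈ Icc 1 K,
          ∑ d ∈ Icc 1 (⌊((q * K : ℕ) : ℝ) ^ (((q : ℝ) - 2) / (q : ℝ) - ε)⌋₊),
            RAEnum q K d w)
      atTop (nhds 0) := by
  have hq0 : 0 < q := by omega
  have hc : ((q : ℝ) - 2) / q - ε < 1 := by
    have : ((q : ℝ) - 2) / q < 1 := by rw [div_lt_one (by positivity)]; linarith
    linarith
  have hρ := tendsto_RARatio_floor_rpow hq0 hε
  refine squeeze_zero'
    (.of_forall fun K => sum_nonneg fun w _ => sum_nonneg fun d _ => RAEnum_nonneg q K d w)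
    ?_ (mul_zero (2 : ℝ) ▸ hρ.const_mul 2)
  filter_upwards
    [(tendsto_id.const_mul_atTop' hq0).eventually (eventually_four_mul_floor_rpow_le hc),
      hρ.eventually_le_const (by norm_num : (0 : ℝ) < 1 / 2)] with K hD hρK
  exact sum_sum_RAEnum_le_two_mul_RARatio q K _ hq0 hD hρK

open Finset Filter in
/-- The expected number of codewords of weight at most `N^{(q-2)/q - ε}` in the RA
ensemble tends to `0` as the block length `N = qK` tends to infinity; consequently the
fraction of codes with minimum distance at most `N^{(q-2)/q-ε}` vanishes. -/
theorem RA_cumulative_WEF_tendsto_zero (q : ℕ) (hq : 3 ≤ q) (ε : ℝ) (hε : 0 < ε)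
    (hε' : ε < ((q : ℝ) - 2) / (q : ℝ)) :
    Tendsto (fun K : ℕ =>
        ∑ w ∈ Icc 1 K,
          ∑ d ∈ Icc 1 (⌊((q * K : ℕ) : ℝ) ^ (((q : ℝ) - 2) / (q : ℝ) - ε)⌋₊),
            RAEnum q K d w)
      atTop (nhds 0) :=
  RA_cumulative_WEF_tendsto_zero_general q hq ε hε
end

section
/- For the RA ensemble bound: for all integers q ≥ 3, K ≥ 1, w with 1 ≤ w ≤ K, d ≥ 1, and N = qK, the expected enumerator satisfies E(A_{d,w}) ≤ (N^w · d^{⌈qw/2⌉-1} · N^{⌊qw/2⌋} / (q^w · N^{qw})) · 2^{qw} · ⌈qw/2⌉ · exp(w(w-1)/(2N)). -/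
open scoped Nat

namespace Nat

theorem pred_descFactorial_mul_pow_le {d N : ℕ} (hdN : d ≤ N) (k : ℕ) :
    (d - 1).descFactorial k * N ^ k ≤ d ^ k * (N - 1).descFactorial k := by
  induction k with
  | zero => simp
  | succ k ih =>
    have hfactor : (d - 1 - k) * N ≤ d * (N - 1 - k) := by
      rcases le_or_gt d (k + 1) with hdk | hkd
      · simp [show d - 1 - k = 0 by omega]
      · zify [show k ≤ d - 1 by omega, show 1 ≤ d by omega, show k ≤ N - 1 by omega,
          show 1 ≤ N by omega]
        nlinarith
    calc (d - 1).descFactorial (k + 1) * N ^ (k + 1)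
        = ((d - 1 - k) * N) * ((d - 1).descFactorial k * N ^ k) := by
          rw [descFactorial_succ, pow_succ]; ring
      _ ≤ (d * (N - 1 - k)) * (d ^ k * (N - 1).descFactorial k) := Nat.mul_le_mul hfactor ih
      _ = d ^ (k + 1) * (N - 1).descFactorial (k + 1) := by
          rw [descFactorial_succ, pow_succ]; ring

theorem descFactorial_eq_mul_pred_descFactorial (N k : ℕ) :
    N.descFactorial (k + 1) = N * (N - 1).descFactorial k := by
  cases N with
  | zero => simp
  | succ n => exact succ_descFactorial_succ n k

theorem pred_descFactorial_mul_sub_descFactorial_mul_pow_le {d N k : ℕ} (hkd : k < d)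
    (hdN : d ≤ N) (f : ℕ) :
    (d - 1).descFactorial k * (N - d).descFactorial f * N ^ (k + 1)
      ≤ d ^ k * N.descFactorial (k + 1 + f) := by
  have hsplit : N.descFactorial (k + 1 + f)
      = N * (N - 1).descFactorial k * (N - (k + 1)).descFactorial f := by
    rw [← descFactorial_mul_descFactorial (Nat.le_add_right (k + 1) f),
      descFactorial_eq_mul_pred_descFactorial, Nat.add_sub_cancel_left]
    ring
  calc (d - 1).descFactorial k * (N - d).descFactorial f * N ^ (k + 1)
      = N * ((d - 1).descFactorial k * N ^ k) * (N - d).descFactorial f := by ring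
    _ ≤ N * (d ^ k * (N - 1).descFactorial k) * (N - (k + 1)).descFactorial f := by
        refine Nat.mul_le_mul (Nat.mul_le_mul_left N (pred_descFactorial_mul_pow_le hdN k)) ?_
        exact descFactorial_le f (by omega)
    _ = d ^ k * N.descFactorial (k + 1 + f) := by rw [hsplit]; ring

theorem choose_pred_mul_choose_sub_mul_pow_le {d N k : ℕ} (hkd : k < d) (hdN : d ≤ N)
    (f : ℕ) :
    (d - 1).choose k * (N - d).choose f * N ^ (k + 1)
      ≤ (k + 1) * (k + 1 + f).choose (k + 1) * d ^ k * N.choose (k + 1 + f) := by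
  have hm : (k + 1 + f)! = (k + 1 + f).choose (k + 1) * (k + 1) * k ! * f ! := by
    rw [add_comm (k + 1) f, ← add_choose_mul_factorial_mul_factorial, factorial_succ]; ring
  refine Nat.le_of_mul_le_mul_right ?_ (Nat.mul_pos (factorial_pos k) (factorial_pos f))
  calc (d - 1).choose k * (N - d).choose f * N ^ (k + 1) * (k ! * f !)
      = (d - 1).descFactorial k * (N - d).descFactorial f * N ^ (k + 1) := by
        rw [descFactorial_eq_factorial_mul_choose, descFactorial_eq_factorial_mul_choose]; ring
    _ ≤ d ^ k * N.descFactorial (k + 1 + f) :=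
        pred_descFactorial_mul_sub_descFactorial_mul_pow_le hkd hdN f
    _ = _ := by rw [descFactorial_eq_factorial_mul_choose, hm]; ring

theorem choose_pred_mul_choose_sub_mul_pow_le_two_pow {d N : ℕ} (hd : 0 < d) (k : ℕ)
    {f : ℕ} (hf : 0 < f) :
    (d - 1).choose k * (N - d).choose f * N ^ (k + 1)
      ≤ (k + 1) * 2 ^ (k + 1 + f) * d ^ k * N.choose (k + 1 + f) := by
  rcases le_or_gt d k with hdk | hkd
  · simp [choose_eq_zero_of_lt (show d - 1 < k by omega)]
  rcases le_or_gt d N with hdN | hNd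
  · calc _ ≤ (k + 1) * (k + 1 + f).choose (k + 1) * d ^ k * N.choose (k + 1 + f) :=
          choose_pred_mul_choose_sub_mul_pow_le hkd hdN f
      _ ≤ _ := by gcongr; exact choose_le_two_pow _ _
  · simp [choose_eq_zero_of_lt (show N - d < f by omega)]

end Nat

theorem RAEnum_le {q K d w : ℕ} (hqw : 2 ≤ q * w) (hK : 0 < K) (hd : 0 < d) :
    RAEnum q K d w ≤
      (K : ℝ) ^ w * (d : ℝ) ^ ((q * w + 1) / 2 - 1) * 2 ^ (q * w) *
        (((q * w + 1) / 2 : ℕ) : ℝ) / ((q * K : ℕ) : ℝ) ^ ((q * w + 1) / 2) := by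
  have hq : 0 < q := Nat.pos_of_ne_zero fun h => by simp [h] at hqw
  obtain ⟨k, hk⟩ : ∃ k, (q * w + 1) / 2 = k + 1 := ⟨(q * w + 1) / 2 - 1, by omega⟩
  have hm : k + 1 + q * w / 2 = q * w := by omega
  have hcount := Nat.choose_pred_mul_choose_sub_mul_pow_le_two_pow (N := q * K) hd k
    (f := q * w / 2) (by omega)
  rw [hm] at hcount
  rw [RAEnum, hk, Nat.add_sub_cancel]
  refine div_le_of_le_mul₀ (by positivity) (by positivity) ?_
  rw [div_mul_eq_mul_div, le_div_iff₀ (by positivity)]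
  have hbound :
      K.choose w * ((d - 1).choose k * (q * K - d).choose (q * w / 2)) * (q * K) ^ (k + 1)
        ≤ K ^ w * d ^ k * 2 ^ (q * w) * (k + 1) * (q * K).choose (q * w) :=
    calc _ = K.choose w *
          ((d - 1).choose k * (q * K - d).choose (q * w / 2) * (q * K) ^ (k + 1)) := by ring
      _ ≤ K ^ w * ((k + 1) * 2 ^ (q * w) * d ^ k * (q * K).choose (q * w)) :=
          Nat.mul_le_mul (Nat.choose_le_pow K w) hcount
      _ = _ := by ring
  exact_mod_cast hbound

theorem RAEnum_upper_bound_general (q K w d : ℕ) (hq : 3 ≤ q) (hK : 1 ≤ K)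
    (hw : 1 ≤ w) (hd : 1 ≤ d) :
    RAEnum q K d w ≤
      ((q * K : ℕ) : ℝ) ^ w * (d : ℝ) ^ ((q * w + 1) / 2 - 1) *
        ((q * K : ℕ) : ℝ) ^ (q * w / 2) / ((q : ℝ) ^ w * ((q * K : ℕ) : ℝ) ^ (q * w)) *
        2 ^ (q * w) * (((q * w + 1) / 2 : ℕ) : ℝ) *
        Real.exp ((w : ℝ) * ((w : ℝ) - 1) / (2 * (q * K : ℕ))) := by
  have hqw : 2 ≤ q * w := (show 2 ≤ q by omega).trans (Nat.le_mul_of_pos_right q hw)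
  have hsplit : ((q * K : ℕ) : ℝ) ^ (q * w)
      = ((q * K : ℕ) : ℝ) ^ ((q * w + 1) / 2) * ((q * K : ℕ) : ℝ) ^ (q * w / 2) := by
    rw [← pow_add]; congr 1; omega
  have hexp : 1 ≤ Real.exp ((w : ℝ) * ((w : ℝ) - 1) / (2 * (q * K : ℕ))) := by
    have hw1 : (1 : ℝ) ≤ w := by exact_mod_cast hw
    exact Real.one_le_exp (div_nonneg (mul_nonneg (by positivity) (by linarith)) (by positivity))
  calc RAEnum q K d w
      ≤ (K : ℝ) ^ w * (d : ℝ) ^ ((q * w + 1) / 2 - 1) * 2 ^ (q * w) *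
          (((q * w + 1) / 2 : ℕ) : ℝ) / ((q * K : ℕ) : ℝ) ^ ((q * w + 1) / 2) :=
        RAEnum_le hqw hK hd
    _ = ((q * K : ℕ) : ℝ) ^ w * (d : ℝ) ^ ((q * w + 1) / 2 - 1) *
          ((q * K : ℕ) : ℝ) ^ (q * w / 2) / ((q : ℝ) ^ w * ((q * K : ℕ) : ℝ) ^ (q * w)) *
          2 ^ (q * w) * (((q * w + 1) / 2 : ℕ) : ℝ) := by
        rw [hsplit]; push_cast; field_simp; ring
    _ ≤ _ := le_mul_of_one_le_right (by positivity) hexp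

/-- Upper bound on the RA ensemble-average IOWEF:
`E(A_{d,w}) ≤ (N^w d^{⌈qw/2⌉-1} N^{⌊qw/2⌋} / (q^w N^{qw})) · 2^{qw} · ⌈qw/2⌉ · e^{w(w-1)/(2N)}`. -/
theorem RAEnum_upper_bound (q K w d : ℕ) (hq : 3 ≤ q) (hK : 1 ≤ K)
    (hw : 1 ≤ w) (hwK : w ≤ K) (hd : 1 ≤ d) :
    RAEnum q K d w ≤
      ((q * K : ℕ) : ℝ) ^ w * (d : ℝ) ^ ((q * w + 1) / 2 - 1) *
        ((q * K : ℕ) : ℝ) ^ (q * w / 2) / ((q : ℝ) ^ w * ((q * K : ℕ) : ℝ) ^ (q * w)) *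
        2 ^ (q * w) * (((q * w + 1) / 2 : ℕ) : ℝ) *
        Real.exp ((w : ℝ) * ((w : ℝ) - 1) / (2 * (q * K : ℕ))) :=
  RAEnum_upper_bound_general q K w d hq hK hw hd
end
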